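/- Let d be a positive even integer and s a positive integer with 2s ≤ d. Then the union ⋃_{ε ∈ I^s} C_ε is a (d-s)-neighborly code: for every two distinct strings u, v ∈ ⋃_{ε ∈ I^s} C_ε one has 1 ≤ dist(u,v) ≤ d - s. -/

import Mathlib

/-- Strings of length `d` over the alphabet `S = {0,1,*}`; `none` is the joker `*`. -/
abbrev JString (d : ℕ) := Fin d → Option Bool

/-- The distance between two strings over `{0,1,*}`: the number of positions where both
entries are binary digits and they differ. -/
def jDist {d : ℕ} (u v : JString d) : ℕ :=
  (Finset.univ.filter fun i => ∃ a b : Bool, u i = some a ∧ v i = some b ∧ a ≠ b).card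

/-- `nkd k d` is `n(k,d)`: the maximum size of a family of strings in `S^d` any two
distinct members of which are at distance at least `1` and at most `k`. -/
noncomputable def nkd (k d : ℕ) : ℕ :=
  sSup {m | ∃ F : Finset (JString d),
    (∀ u ∈ F, ∀ v ∈ F, u ≠ v → 1 ≤ jDist u v ∧ jDist u v ≤ k) ∧ F.card = m}

/-- The weight `|x|` of a binary string. -/
def wt {n : ℕ} (x : Fin n → Bool) : ℕ := (Finset.univ.filter fun i => x i = true).card

/-- The inner product `⟨x,y⟩` of two binary strings. -/
def ip {n : ℕ} (x y : Fin n → Bool) : ℕ :=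
  (Finset.univ.filter fun i => x i = true ∧ y i = true).card

/-- The antipode `x̄` of a binary string. -/
def antipode {n : ℕ} (x : Fin n → Bool) : Fin n → Bool := fun i => !(x i)

/-- `t(ε)` (0-based): the largest index at which `ε` differs from its last entry; for
nonconstant `ε` this is the unique (0-based) index `i` with `ε i ≠ ε (i+1) = ⋯ = ε (s-1)`. -/
noncomputable def tIdx {s : ℕ} (ε : Fin s → Bool) : ℕ :=
  sSup {i : ℕ | ∃ h : i < s, ∃ h' : s - 1 < s, ε ⟨i, h⟩ ≠ ε ⟨s - 1, h'⟩}

/-- The set `A_ε = {ε_1} × ⋯ × {ε_{t(ε)}} × I^{s-1-t(ε)} ⊆ I^{s-1}`. -/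
def Aset {s : ℕ} (ε : Fin s → Bool) : Set (Fin (s - 1) → Bool) :=
  {x | ∀ j : Fin (s - 1), (j : ℕ) ≤ tIdx ε →
    x j = ε ⟨(j : ℕ), Nat.lt_of_lt_of_le j.isLt (Nat.sub_le s 1)⟩}

/-- The sets `X_k ⊆ I^{d-s}`: `X_0 = {|x| ≤ d/2 - s}`, `X_k = {|x| = d/2 - s + k}` for
`0 < k < s`, and `X_s = {|x| ≥ d/2}`. -/
def Xk (d s k : ℕ) : Set (Fin (d - s) → Bool) :=
  if k = 0 then {x | wt x ≤ d / 2 - s}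
  else if k = s then {x | d / 2 ≤ wt x}
  else {x | wt x = d / 2 - s + k}

/-- The last `m` coordinates of a binary string of length `n` (junk values if `m > n`). -/
def suffix (m : ℕ) {n : ℕ} (x : Fin n → Bool) : Fin m → Bool :=
  fun j => if h : n - m + (j : ℕ) < n then x ⟨n - m + (j : ℕ), h⟩ else false

/-- The set `B_ε ⊆ I^{d-s}`: `B_α = X_0`, `B_ω = X_s`, and for `ε ∉ {α,ω}`,
`B_ε = X_{|ε|} ∩ (I^{d-2s+1} × A_ε)`, identifying `I^{d-s}` with `I^{d-2s+1} × I^{s-1}`. -/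
def Bset (d : ℕ) {s : ℕ} (ε : Fin s → Bool) : Set (Fin (d - s) → Bool) :=
  if ε = (fun _ => false) then Xk d s 0
  else if ε = (fun _ => true) then Xk d s s
  else Xk d s (wt ε) ∩ {x | suffix (s - 1) x ∈ Aset ε}

/-- Concatenation of a binary string of length `d - s` with a string over `{0,1,*}` of
length `s`, producing a string over `{0,1,*}` of length `d`. -/
def glue {d s : ℕ} (x : Fin (d - s) → Bool) (w : Fin s → Option Bool) : JString d :=
  fun i => if h : (i : ℕ) < d - s then some (x ⟨(i : ℕ), h⟩)
    else if h' : (i : ℕ) - (d - s) < s then w ⟨(i : ℕ) - (d - s), h'⟩ else none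

/-- The set `*^ε = *^{ε_1} × ⋯ × *^{ε_s} ⊆ S^s`, where `*^0 = {*}` and `*^1 = {0,1}`. -/
def starSet {s : ℕ} (ε : Fin s → Bool) : Set (Fin s → Option Bool) :=
  {w | ∀ j, if ε j = true then ∃ b : Bool, w j = some b else w j = none}

/-- The set `C_ε = B_ε × *^ε ⊆ S^d`. -/
def Cset (d : ℕ) {s : ℕ} (ε : Fin s → Bool) : Set (JString d) :=
  {u | ∃ x ∈ Bset d ε, ∃ w ∈ starSet ε, u = glue x w}

/-! Write `u = x w`, `v = y z` with `x ∈ B_ε`, `y ∈ B_δ`, `w ∈ *^ε`, `z ∈ *^δ`. Then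
`dist(u,v) = dist(x,y) + dist(w,z)` and `dist(w,z) ≤ ⟨ε,δ⟩`, so the upper bound comes down to
`dist(x,y) + ⟨ε,δ⟩ ≤ d - s`. The weight bounds `|x| ≥ d/2 - s + |ε|`, `|y| ≥ d/2 - s + |δ|` give
this as soon as `x, y` have at least as many common zeros as `ε, δ`. Otherwise `ε, δ` are not
constant; if `t(ε) ≤ t(δ)`, the constraints `A_ε`, `A_δ` copy the first `t(ε) + 1` entries of `ε`
and `δ` into the same coordinates of `x` and `y`, and since `ε` is constant after `t(ε)`, all
common ones (tail `0`) or all common zeros (tail `1`) of `ε, δ` are copied, which suffices.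

For the lower bound, `|x|` determines `|ε|`, and then `A_ε` together with `|ε|` determines `ε`:
so `x = y` forces `ε = δ`, and distinct `w, z ∈ *^ε` differ at a binary position. -/

open Finset

section BinaryStrings

variable {n : ℕ}

lemma wt_le (x : Fin n → Bool) : wt x ≤ n :=
  (card_filter_le _ _).trans (card_fin n).le

lemma eq_of_imp_of_wt_eq {x y : Fin n → Bool} (hxy : ∀ i, x i = true → y i = true)
    (hw : wt x = wt y) : x = y := by
  have hsub : ({i | x i = true} : Finset (Fin n)) ⊆ ({i | y i = true} : Finset (Fin n)) :=
    fun i => by simpa using hxy i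
  have heq := eq_of_subset_of_card_le hsub hw.ge
  funext i
  simpa using congrArg (i ∈ ·) heq

lemma wt_eq_zero_iff {x : Fin n → Bool} : wt x = 0 ↔ x = fun _ => false := by
  refine ⟨fun h => (eq_of_imp_of_wt_eq (by simp) ?_).symm, ?_⟩
  · rw [h]; simp [wt]
  · rintro rfl; simp [wt]

lemma wt_eq_iff {x : Fin n → Bool} : wt x = n ↔ x = fun _ => true := by
  refine ⟨fun h => eq_of_imp_of_wt_eq (by simp) ?_, ?_⟩
  · rw [h]; simp [wt]
  · rintro rfl; simp [wt]

lemma ip_comm (x y : Fin n → Bool) : ip x y = ip y x := by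
  simp only [ip, and_comm]

lemma wt_add_wt (x y : Fin n → Bool) : wt x + wt y = hammingDist x y + 2 * ip x y := by
  simp only [wt, ip, hammingDist, card_filter, two_mul, ← sum_add_distrib]
  refine sum_congr rfl fun i _ => ?_
  cases x i <;> cases y i <;> simp

lemma hammingDist_add_ip_add_zeros (x y : Fin n → Bool) :
    hammingDist x y + ip x y + #{i | x i = false ∧ y i = false} = n := by
  simp only [ip, hammingDist, card_filter, ← sum_add_distrib]
  calc _ = ∑ _i : Fin n, 1 := sum_congr rfl fun i _ => by cases x i <;> cases y i <;> simp
    _ = n := by simp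

end BinaryStrings

section Joker

variable {s : ℕ} {ε δ : Fin s → Bool} {w z : Fin s → Option Bool}

lemma jDist_le_ip (hw : w ∈ starSet ε) (hz : z ∈ starSet δ) : jDist w z ≤ ip ε δ := by
  refine card_le_card fun j hj => ?_
  simp only [mem_filter, mem_univ, true_and] at hj ⊢
  obtain ⟨a, b, ha, hb, -⟩ := hj
  have hwj := hw j
  have hzj := hz j
  constructor <;> by_contra h <;> simp_all

lemma one_le_jDist_of_mem_starSet (hw : w ∈ starSet ε) (hz : z ∈ starSet ε) (hwz : w ≠ z) :
    1 ≤ jDist w z := by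
  obtain ⟨j, hj⟩ := Function.ne_iff.1 hwz
  refine card_pos.2 ⟨j, ?_⟩
  have hwj := hw j
  have hzj := hz j
  cases hε : ε j <;> simp only [hε, if_true, Bool.false_eq_true, if_false] at hwj hzj
  · exact absurd (hwj.trans hzj.symm) hj
  · obtain ⟨a, ha⟩ := hwj
    obtain ⟨b, hb⟩ := hzj
    simp only [mem_filter, mem_univ, true_and]
    exact ⟨a, b, ha, hb, by rintro rfl; exact hj (ha.trans hb.symm)⟩

lemma jDist_glue {d : ℕ} (hsd : s ≤ d) (x y : Fin (d - s) → Bool) (w z : Fin s → Option Bool) :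
    jDist (glue x w) (glue y z) = hammingDist x y + jDist w z := by
  simp only [jDist, hammingDist, card_filter]
  rw [← Fin.sum_congr' _ (Nat.sub_add_cancel hsd), Fin.sum_univ_add]
  congr 1 <;> exact sum_congr rfl fun i _ => by simp [glue]

end Joker

section Tail

variable {s : ℕ} {ε : Fin s → Bool}

lemma eq_of_tIdx_lt {j k : Fin s} (hj : tIdx ε < j) (hk : tIdx ε < k) : ε j = ε k := by
  have hlast : ∀ j : Fin s, tIdx ε < j → ε j = ε ⟨s - 1, by have := j.isLt; omega⟩ := fun j hj => by
    by_contra h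
    exact (le_csSup ⟨s, fun i hi => hi.1.le⟩ ⟨j.isLt, _, h⟩ : (j : ℕ) ≤ tIdx ε).not_gt hj
  rw [hlast j hj, hlast k hk]

lemma tIdx_add_one_lt (hα : ε ≠ fun _ => false) (hω : ε ≠ fun _ => true) : tIdx ε + 1 < s := by
  obtain ⟨j, hj⟩ : ∃ j, ε j = true := by
    by_contra! h
    exact hα (funext fun j => by simpa using h j)
  obtain ⟨k, hk⟩ : ∃ k, ε k = false := by
    by_contra! h
    exact hω (funext fun k => by simpa using h k)
  have hs : s - 1 < s := by have := j.isLt; omega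
  have hne : {i | ∃ h : i < s, ∃ h' : s - 1 < s, ε ⟨i, h⟩ ≠ ε ⟨s - 1, h'⟩}.Nonempty := by
    cases hl : ε ⟨s - 1, hs⟩
    · exact ⟨j, j.isLt, hs, by simp [hj, hl]⟩
    · exact ⟨k, k.isLt, hs, by simp [hk, hl]⟩
  obtain ⟨ht, h', hne'⟩ := Nat.sSup_mem hne ⟨s, fun i hi => hi.1.le⟩
  have : tIdx ε ≠ s - 1 := fun h => hne' (by simp only [tIdx] at h; simp only [h])
  unfold tIdx at this ⊢
  omega

end Tail

section Bset

variable {d s : ℕ} {ε δ : Fin s → Bool} {x y : Fin (d - s) → Bool}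

lemma mem_Bset_of_ne (hα : ε ≠ fun _ => false) (hω : ε ≠ fun _ => true) (hx : x ∈ Bset d ε) :
    wt x = d / 2 - s + wt ε ∧ suffix (s - 1) x ∈ Aset ε := by
  have h0 : wt ε ≠ 0 := mt wt_eq_zero_iff.1 hα
  have hs : wt ε ≠ s := mt wt_eq_iff.1 hω
  simpa [Bset, Xk, hα, hω, h0, hs] using hx

lemma le_wt_of_mem_Bset (hsd : 2 * s ≤ d) (hα : ε ≠ fun _ => false) (hx : x ∈ Bset d ε) :
    d / 2 - s + wt ε ≤ wt x := by
  by_cases hω : ε = fun _ => true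
  · subst hω
    have hs : s ≠ 0 := by rintro rfl; exact hα (funext Fin.elim0)
    simp only [Bset, Xk, hα, hs, if_false, if_true, Set.mem_ofPred_eq] at hx
    rw [wt_eq_iff.2 rfl]
    omega
  · exact (mem_Bset_of_ne hα hω hx).1.ge

lemma wt_le_of_mem_Bset (hω : ε ≠ fun _ => true) (hx : x ∈ Bset d ε) :
    wt x ≤ d / 2 - s + wt ε := by
  by_cases hα : ε = fun _ => false
  · subst hα
    simpa [Bset, Xk, wt_eq_zero_iff.2 rfl] using hx
  · exact (mem_Bset_of_ne hα hω hx).1.le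

lemma wt_le_wt_of_mem_Bset (hsd : 2 * s ≤ d) (hx : x ∈ Bset d ε) (hx' : x ∈ Bset d δ) :
    wt ε ≤ wt δ := by
  by_contra! h
  have hδ := wt_le_of_mem_Bset (mt wt_eq_iff.2 (by have := wt_le ε; omega)) hx'
  have hε := le_wt_of_mem_Bset hsd (mt wt_eq_zero_iff.2 (by omega)) hx
  omega

-- `suffix (s - 1) x` starts at coordinate `(d - s) - (s - 1) = d - 2s + 1` of `x`.
lemma apply_eq_of_mem_Bset (hsd : 2 * s ≤ d) (hα : ε ≠ fun _ => false)
    (hω : ε ≠ fun _ => true) (hx : x ∈ Bset d ε) {j : Fin s} (hj : (j : ℕ) ≤ tIdx ε)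
    {i : Fin (d - s)} (hi : (i : ℕ) = d - 2 * s + 1 + j) : x i = ε j := by
  have ht := tIdx_add_one_lt hα hω
  have := (mem_Bset_of_ne hα hω hx).2 ⟨j, by omega⟩ hj
  simp only [suffix] at this
  rw [dif_pos (by omega)] at this
  convert this using 2
  ext
  simp only
  omega

lemma card_common_le_of_mem_Bset (hsd : 2 * s ≤ d) (hεα : ε ≠ fun _ => false)
    (hεω : ε ≠ fun _ => true) (hδα : δ ≠ fun _ => false) (hδω : δ ≠ fun _ => true)
    (ht : tIdx ε ≤ tIdx δ) (hx : x ∈ Bset d ε) (hy : y ∈ Bset d δ) (b : Bool)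
    (hb : ∀ j : Fin s, tIdx ε < j → ε j ≠ b) :
    #{j | ε j = b ∧ δ j = b} ≤ #{i | x i = b ∧ y i = b} := by
  have hs := tIdx_add_one_lt hεα hεω
  refine card_le_card_of_surjOn (fun i : Fin (d - s) => (⟨i - (d - 2 * s + 1), by omega⟩ : Fin s))
    fun j hj => ?_
  simp only [coe_filter, mem_univ, true_and, Set.mem_ofPred_eq] at hj
  have hjt : (j : ℕ) ≤ tIdx ε := by
    by_contra! h
    exact hb j h hj.1
  refine ⟨⟨d - 2 * s + 1 + j, by omega⟩, ?_, Fin.ext (by simp)⟩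
  simp only [coe_filter, mem_univ, true_and, Set.mem_ofPred_eq]
  rw [apply_eq_of_mem_Bset hsd hεα hεω hx hjt rfl,
    apply_eq_of_mem_Bset hsd hδα hδω hy (hjt.trans ht) rfl]
  exact hj

lemma eq_of_mem_Bset_of_wt_eq (hsd : 2 * s ≤ d) (hεα : ε ≠ fun _ => false)
    (hεω : ε ≠ fun _ => true) (hδα : δ ≠ fun _ => false) (hδω : δ ≠ fun _ => true)
    (ht : tIdx ε ≤ tIdx δ) (hx : x ∈ Bset d ε) (hx' : x ∈ Bset d δ) (hw : wt ε = wt δ) :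
    ε = δ := by
  have hs := tIdx_add_one_lt hεα hεω
  have hhead : ∀ j : Fin s, (j : ℕ) ≤ tIdx ε → ε j = δ j := fun j hj =>
    (apply_eq_of_mem_Bset hsd hεα hεω hx hj (i := ⟨d - 2 * s + 1 + j, by omega⟩) rfl).symm.trans
      (apply_eq_of_mem_Bset hsd hδα hδω hx' (hj.trans ht) rfl)
  have htail : ∀ j : Fin s, tIdx ε < j → ε j = ε ⟨s - 1, by omega⟩ := fun j hj =>
    eq_of_tIdx_lt hj (by simp only; omega)
  -- beyond `t(ε)` the string `ε` is constant, so one of `ε`, `δ` dominates the other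
  cases hc : ε ⟨s - 1, by omega⟩
  · refine eq_of_imp_of_wt_eq (fun j hj => ?_) hw
    by_cases hjt : (j : ℕ) ≤ tIdx ε
    · rwa [← hhead j hjt]
    · simp_all
  · refine (eq_of_imp_of_wt_eq (fun j hj => ?_) hw.symm).symm
    by_cases hjt : (j : ℕ) ≤ tIdx ε
    · rwa [hhead j hjt]
    · exact (htail j (by omega)).trans hc

lemma eq_of_mem_Bset_of_mem_Bset (hsd : 2 * s ≤ d) (hx : x ∈ Bset d ε) (hx' : x ∈ Bset d δ) :
    ε = δ := by
  have hw := (wt_le_wt_of_mem_Bset hsd hx hx').antisymm (wt_le_wt_of_mem_Bset hsd hx' hx)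
  by_cases h0 : wt ε = 0
  · rw [wt_eq_zero_iff.1 h0, wt_eq_zero_iff.1 (hw.symm.trans h0)]
  by_cases hs : wt ε = s
  · rw [wt_eq_iff.1 hs, wt_eq_iff.1 (hw.symm.trans hs)]
  have hεα := mt wt_eq_zero_iff.2 h0
  have hεω := mt wt_eq_iff.2 hs
  have hδα := mt wt_eq_zero_iff.2 (hw ▸ h0)
  have hδω := mt wt_eq_iff.2 (hw ▸ hs)
  rcases le_total (tIdx ε) (tIdx δ) with ht | ht
  · exact eq_of_mem_Bset_of_wt_eq hsd hεα hεω hδα hδω ht hx hx' hw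
  · exact (eq_of_mem_Bset_of_wt_eq hsd hδα hδω hεα hεω ht hx' hx hw.symm).symm

end Bset

lemma hammingDist_add_ip_le_of_wt {n s m : ℕ} {x y : Fin n → Bool} {ε δ : Fin s → Bool}
    (hn : n ≤ 2 * m + s) (hx : m + wt ε ≤ wt x) (hy : m + wt δ ≤ wt y)
    (hz : #{j | ε j = false ∧ δ j = false} ≤ #{i | x i = false ∧ y i = false}) :
    hammingDist x y + ip ε δ ≤ n := by
  have := wt_add_wt x y
  have := wt_add_wt ε δ
  have := hammingDist_add_ip_add_zeros x y
  have := hammingDist_add_ip_add_zeros ε δ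
  omega

lemma hammingDist_add_ip_le {d s : ℕ} {ε δ : Fin s → Bool} {x y : Fin (d - s) → Bool}
    (hde : Even d) (hsd : 2 * s ≤ d) (hx : x ∈ Bset d ε) (hy : y ∈ Bset d δ) :
    hammingDist x y + ip ε δ ≤ d - s := by
  wlog ht : tIdx ε ≤ tIdx δ generalizing ε δ x y
  · rw [hammingDist_comm, ip_comm]
    exact this hy hx (le_of_not_ge ht)
  have hn : d - s ≤ 2 * (d / 2 - s) + s := by
    obtain ⟨k, rfl⟩ := hde
    omega
  by_cases hεα : ε = fun _ => false
  · subst hεα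
    simpa [ip] using hammingDist_le_card_fintype.trans (Fintype.card_fin _).le
  by_cases hδα : δ = fun _ => false
  · subst hδα
    simpa [ip] using hammingDist_le_card_fintype.trans (Fintype.card_fin _).le
  have hwx := le_wt_of_mem_Bset hsd hεα hx
  have hwy := le_wt_of_mem_Bset hsd hδα hy
  by_cases hz : #{j | ε j = false ∧ δ j = false} = 0
  · exact hammingDist_add_ip_le_of_wt hn hwx hwy (by omega)
  have hεω : ε ≠ fun _ => true := by rintro rfl; simp at hz
  have hδω : δ ≠ fun _ => true := by rintro rfl; simp at hz
  have hs := tIdx_add_one_lt hεα hεω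
  have htail : ∀ j : Fin s, tIdx ε < j → ε j = ε ⟨s - 1, by omega⟩ := fun j hj =>
    eq_of_tIdx_lt hj (by simp only; omega)
  have hcommon := card_common_le_of_mem_Bset hsd hεα hεω hδα hδω ht hx hy
  -- the value of `ε` beyond `t(ε)` decides whether common ones or common zeros are forced
  cases hc : ε ⟨s - 1, by omega⟩
  · have hip : ip ε δ ≤ ip x y := hcommon true fun j hj => by simp [htail j hj, hc]
    have := hammingDist_add_ip_add_zeros x y
    omega
  · exact hammingDist_add_ip_le_of_wt hn hwx hwy
      (hcommon false fun j hj => by simp [htail j hj, hc])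

theorem Cset_union_neighborly_general (d s : ℕ) (hde : Even d) (hsd : 2 * s ≤ d) :
    ∀ u ∈ (⋃ ε : Fin s → Bool, Cset d ε), ∀ v ∈ (⋃ ε : Fin s → Bool, Cset d ε),
      u ≠ v → 1 ≤ jDist u v ∧ jDist u v ≤ d - s := by
  intro u hu v hv huv
  simp only [Set.mem_iUnion] at hu hv
  obtain ⟨ε, x, hx, w, hw, rfl⟩ := hu
  obtain ⟨δ, y, hy, z, hz, rfl⟩ := hv
  rw [jDist_glue (by omega)]
  refine ⟨?_, (Nat.add_le_add_left (jDist_le_ip hw hz) _).trans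
    (hammingDist_add_ip_le hde hsd hx hy)⟩
  by_cases hxy : x = y
  · subst hxy
    obtain rfl := eq_of_mem_Bset_of_mem_Bset hsd hx hy
    have := one_le_jDist_of_mem_starSet hw hz fun hwz => huv (by rw [hwz])
    omega
  · have := hammingDist_pos.2 hxy
    omega

/-- Let `d` be a positive even integer and `s` positive with `2s ≤ d`.
The union `⋃_{ε ∈ I^s} C_ε` is a `(d-s)`-neighborly code: any two distinct members `u, v`
satisfy `1 ≤ dist(u,v) ≤ d - s`. -/
theorem Cset_union_neighborly (d s : ℕ) (hd : 0 < d) (hde : Even d) (hs : 0 < s)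
    (hsd : 2 * s ≤ d) :
    ∀ u ∈ (⋃ ε : Fin s → Bool, Cset d ε), ∀ v ∈ (⋃ ε : Fin s → Bool, Cset d ε),
      u ≠ v → 1 ≤ jDist u v ∧ jDist u v ≤ d - s :=
  Cset_union_neighborly_general d s hde hsd
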